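/- The 4×4 matrix M_O with rows (2,0,0,1),(0,1,−1,0),(0,−1,1,0),(1,0,0,2) has spectrum {0,1,2,3}, hence its numerical range is [0,3]; moreover its local numerical range (over product unit vectors in ℂ²⊗ℂ²) is [1/2, 5/2], and the maximum 5/2 is attained only at complex product vectors (e.g., x = (1,i)/√2, y = (1,−i)/√2), while over real product vectors the expectation value never exceeds 2. -/

import Mathlib

open Matrix

/-- Kronecker product vector of `x, y ∈ ℂ²` in the ordered basis
`(e₁⊗f₁, e₁⊗f₂, e₂⊗f₁, e₂⊗f₂)`. -/
def kvec (x y : Fin 2 → ℂ) : Fin 4 → ℂ := ![x 0 * y 0, x 0 * y 1, x 1 * y 0, x 1 * y 1]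

/-!
In the eigenbasis `(1,0,0,1), (1,0,0,-1), (0,1,1,0), (0,1,-1,0)` of `M_O` (eigenvalues
`3, 1, 0, 2`) the quadratic form is a convex combination of the eigenvalues, which gives the
numerical range. Since `M_O = 3/2 + 1/2 σ_z ⊗ σ_z - σ_y ⊗ σ_y`, on a product of unit vectors
with Bloch vectors `u, v` it equals `3/2 + u_z v_z / 2 - u_y v_y`, and
`|u_z v_z / 2 - u_y v_y| ≤ 1` for unit `u, v`, with every value in `[-1, 1]` attained already
for `u = e_y` and `v` on the equator. Real vectors have `u_y = v_y = 0`, so there the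
expectation is at most `3/2 + 1/2 = 2`.
-/

open Complex ComplexConjugate Set

theorem star_dotProduct_self_eq_normSq {n : Type*} [Fintype n] (v : n → ℂ) :
    star v ⬝ᵥ v = ((∑ i, normSq (v i) : ℝ) : ℂ) := by
  simp [dotProduct, normSq_eq_conj_mul_self]

theorem normSq_add_normSq_eq_one {x : Fin 2 → ℂ} (hx : star x ⬝ᵥ x = 1) :
    normSq (x 0) + normSq (x 1) = 1 := by
  rw [star_dotProduct_self_eq_normSq, Fin.sum_univ_two] at hx
  exact_mod_cast hx

def M_O : Matrix (Fin 4) (Fin 4) ℂ := !![2,0,0,1; 0,1,-1,0; 0,-1,1,0; 1,0,0,2]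

def numericalRange {n : Type*} [Fintype n] (A : Matrix n n ℂ) : Set ℂ :=
  {z | ∃ ψ : n → ℂ, star ψ ⬝ᵥ ψ = 1 ∧ z = star ψ ⬝ᵥ A *ᵥ ψ}

def localNumericalRange (A : Matrix (Fin 4) (Fin 4) ℂ) : Set ℂ :=
  {z | ∃ x y : Fin 2 → ℂ, star x ⬝ᵥ x = 1 ∧ star y ⬝ᵥ y = 1 ∧
    z = star (kvec x y) ⬝ᵥ A *ᵥ kvec x y}

theorem spectrum_M_O : spectrum ℂ M_O = {0, 1, 2, 3} := by
  ext z
  rw [spectrum.mem_iff, Matrix.isUnit_iff_isUnit_det, isUnit_iff_ne_zero, not_not]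
  have hdet : (algebraMap ℂ _ z - M_O).det = z * (z - 1) * (z - 2) * (z - 3) := by
    simp [M_O, Matrix.det_succ_row_zero, Fin.sum_univ_succ, Matrix.algebraMap_eq_diagonal,
      Matrix.diagonal_apply, Fin.succAbove]
    ring
  simp only [hdet, mul_eq_zero, sub_eq_zero, Set.mem_insert_iff, Set.mem_singleton_iff]
  tauto

theorem star_dotProduct_M_O_mulVec (ψ : Fin 4 → ℂ) :
    star ψ ⬝ᵥ M_O *ᵥ ψ =
      (((3 * normSq (ψ 0 + ψ 3) + normSq (ψ 0 - ψ 3)) / 2 + normSq (ψ 1 - ψ 2) : ℝ) : ℂ) := by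
  simp [M_O, dotProduct, mulVec, Fin.sum_univ_four, normSq_eq_conj_mul_self]
  ring

theorem numericalRange_M_O : numericalRange M_O = ofReal '' Icc 0 3 := by
  apply Subset.antisymm
  · rintro _ ⟨ψ, hψ, rfl⟩
    rw [star_dotProduct_self_eq_normSq, Fin.sum_univ_four] at hψ
    have hunit : normSq (ψ 0) + normSq (ψ 1) + normSq (ψ 2) + normSq (ψ 3) = 1 := by
      exact_mod_cast hψ
    refine ⟨_, ⟨?_, ?_⟩, (star_dotProduct_M_O_mulVec ψ).symm⟩
    · linarith [normSq_nonneg (ψ 0 + ψ 3), normSq_nonneg (ψ 0 - ψ 3), normSq_nonneg (ψ 1 - ψ 2)]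
    · linarith [normSq_nonneg (ψ 0 - ψ 3), normSq_nonneg (ψ 1 + ψ 2), normSq_nonneg (ψ 1 - ψ 2),
        normSq_add (ψ 0) (ψ 3), normSq_sub (ψ 0) (ψ 3), normSq_add (ψ 1) (ψ 2),
        normSq_sub (ψ 1) (ψ 2)]
  · rintro _ ⟨r, ⟨hr0, hr3⟩, rfl⟩
    -- a combination of the eigenvectors `(1,0,0,1)` for `3` and `(0,1,1,0)` for `0`
    obtain ⟨p, q, hp, hq⟩ : ∃ p q : ℝ, p * p = r / 6 ∧ q * q = (3 - r) / 6 :=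
      ⟨_, _, Real.mul_self_sqrt (by linarith), Real.mul_self_sqrt (by linarith)⟩
    refine ⟨![(p : ℂ), q, q, p], ?_, ?_⟩
    · rw [star_dotProduct_self_eq_normSq, Fin.sum_univ_four]
      simp [Matrix.cons_val, hp, hq]
      ring
    · rw [star_dotProduct_M_O_mulVec]
      congr 1
      simp [Matrix.cons_val, ← ofReal_add, normSq_ofReal]
      linarith

-- Bloch coordinates of `x`, scaled by `‖x‖²`.
def blochY (x : Fin 2 → ℂ) : ℝ := 2 * (conj (x 0) * x 1).im

def blochZ (x : Fin 2 → ℂ) : ℝ := normSq (x 0) - normSq (x 1)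

theorem blochY_sq_add_blochZ_sq_le {x : Fin 2 → ℂ} (hx : star x ⬝ᵥ x = 1) :
    blochY x ^ 2 + blochZ x ^ 2 ≤ 1 := by
  have h := normSq_add_normSq_eq_one hx
  simp only [blochY, blochZ, normSq_apply, mul_im, conj_re, conj_im] at h ⊢
  nlinarith [sq_nonneg ((x 0).re * (x 1).re + (x 0).im * (x 1).im)]

theorem abs_mul_div_two_sub_mul_le_one {a b c d : ℝ} (hab : a ^ 2 + b ^ 2 ≤ 1)
    (hcd : c ^ 2 + d ^ 2 ≤ 1) : |b * d / 2 - a * c| ≤ 1 := by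
  rw [abs_le]
  constructor <;> nlinarith [sq_nonneg (a + c), sq_nonneg (a - c), sq_nonneg (b + d),
    sq_nonneg (b - d)]

theorem star_kvec_dotProduct_M_O_mulVec (x y : Fin 2 → ℂ) :
    star (kvec x y) ⬝ᵥ M_O *ᵥ kvec x y =
      ((3 / 2 * ((normSq (x 0) + normSq (x 1)) * (normSq (y 0) + normSq (y 1)))
        + blochZ x * blochZ y / 2 - blochY x * blochY y : ℝ) : ℂ) := by
  apply Complex.ext <;>
  simp [M_O, kvec, blochY, blochZ, dotProduct, mulVec, Fin.sum_univ_four, normSq_apply] <;>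
  ring

theorem star_kvec_dotProduct_M_O_mulVec_of_unit {x y : Fin 2 → ℂ} (hx : star x ⬝ᵥ x = 1)
    (hy : star y ⬝ᵥ y = 1) :
    star (kvec x y) ⬝ᵥ M_O *ᵥ kvec x y =
      ((3 / 2 + blochZ x * blochZ y / 2 - blochY x * blochY y : ℝ) : ℂ) := by
  rw [star_kvec_dotProduct_M_O_mulVec, normSq_add_normSq_eq_one hx,
    normSq_add_normSq_eq_one hy, one_mul, mul_one]

noncomputable def equatorState (w : ℂ) : Fin 2 → ℂ := ![1 / Real.sqrt 2, w / Real.sqrt 2]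

theorem star_equatorState_dotProduct {w : ℂ} (hw : normSq w = 1) :
    star (equatorState w) ⬝ᵥ equatorState w = 1 := by
  rw [star_dotProduct_self_eq_normSq, Fin.sum_univ_two]
  norm_num [equatorState, hw]

theorem blochZ_equatorState {w : ℂ} (hw : normSq w = 1) : blochZ (equatorState w) = 0 := by
  simp [blochZ, equatorState, hw]

theorem blochY_equatorState (w : ℂ) : blochY (equatorState w) = w.im := by
  simp [blochY, equatorState]
  ring

theorem star_kvec_equatorState_dotProduct_M_O_mulVec {w : ℂ} (hw : normSq w = 1) :
    star (kvec (equatorState I) (equatorState w)) ⬝ᵥ M_O *ᵥ kvec (equatorState I) (equatorState w)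
      = ((3 / 2 - w.im : ℝ) : ℂ) := by
  rw [star_kvec_dotProduct_M_O_mulVec_of_unit (star_equatorState_dotProduct (by simp))
    (star_equatorState_dotProduct hw), blochY_equatorState, blochY_equatorState,
    blochZ_equatorState hw]
  simp

theorem localNumericalRange_M_O : localNumericalRange M_O = ofReal '' Icc (1 / 2) (5 / 2) := by
  apply Subset.antisymm
  · rintro _ ⟨x, y, hx, hy, rfl⟩
    rw [star_kvec_dotProduct_M_O_mulVec_of_unit hx hy]
    have := abs_mul_div_two_sub_mul_le_one (blochY_sq_add_blochZ_sq_le hx)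
      (blochY_sq_add_blochZ_sq_le hy)
    refine ⟨_, ⟨?_, ?_⟩, rfl⟩ <;> linarith [abs_le.mp this]
  · rintro _ ⟨r, ⟨hr0, hr3⟩, rfl⟩
    obtain ⟨t, rfl⟩ : ∃ t, r = 3 / 2 + t := ⟨r - 3 / 2, by ring⟩
    have ht : t ^ 2 ≤ 1 := by nlinarith
    have hw : normSq (√(1 - t ^ 2) + (-t : ℝ) * I) = 1 := by
      rw [normSq_add_mul_I, Real.sq_sqrt (by linarith)]
      ring
    refine ⟨equatorState I, _, star_equatorState_dotProduct (by simp),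
      star_equatorState_dotProduct hw, ?_⟩
    rw [star_kvec_equatorState_dotProduct_M_O_mulVec hw]
    simp

theorem blochY_ofReal (x : Fin 2 → ℝ) : blochY (fun i => (x i : ℂ)) = 0 := by
  simp [blochY]

theorem star_ofReal_dotProduct_self {x : Fin 2 → ℝ} (hx : x 0 ^ 2 + x 1 ^ 2 = 1) :
    star (fun i => (x i : ℂ)) ⬝ᵥ (fun i => (x i : ℂ)) = 1 := by
  rw [star_dotProduct_self_eq_normSq, Fin.sum_univ_two]
  simp [normSq_ofReal, ← sq, hx]

theorem re_star_kvec_ofReal_dotProduct_M_O_mulVec_le_two {x y : Fin 2 → ℝ}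
    (hx : x 0 ^ 2 + x 1 ^ 2 = 1) (hy : y 0 ^ 2 + y 1 ^ 2 = 1) :
    (star (kvec (fun i => (x i : ℂ)) (fun i => (y i : ℂ))) ⬝ᵥ
        M_O *ᵥ kvec (fun i => (x i : ℂ)) (fun i => (y i : ℂ))).re ≤ 2 := by
  have hx' := star_ofReal_dotProduct_self hx
  have hy' := star_ofReal_dotProduct_self hy
  have hzx := blochY_sq_add_blochZ_sq_le hx'
  have hzy := blochY_sq_add_blochZ_sq_le hy'
  rw [star_kvec_dotProduct_M_O_mulVec_of_unit hx' hy', ofReal_re]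
  rw [blochY_ofReal] at hzx hzy ⊢
  nlinarith [sq_nonneg (blochZ (fun i => (x i : ℂ)) - blochZ (fun i => (y i : ℂ)))]

/-- `M_O = [[2,0,0,1],[0,1,-1,0],[0,-1,1,0],[1,0,0,2]]` has spectrum `{0,1,2,3}`,
numerical range `[0,3]`, local numerical range `[1/2, 5/2]`; the maximum `5/2` is attained
at the complex product vector `x = (1,i)/√2`, `y = (1,-i)/√2`, while on real product
vectors the expectation value never exceeds `2`. -/
theorem example_X_matrix :
    let M : Matrix (Fin 4) (Fin 4) ℂ := !![2,0,0,1; 0,1,-1,0; 0,-1,1,0; 1,0,0,2]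
    spectrum ℂ M = {0, 1, 2, 3} ∧
    {z : ℂ | ∃ ψ : Fin 4 → ℂ, star ψ ⬝ᵥ ψ = 1 ∧ z = star ψ ⬝ᵥ M.mulVec ψ} =
      (fun r : ℝ => (r : ℂ)) '' Set.Icc (0 : ℝ) 3 ∧
    {z : ℂ | ∃ x y : Fin 2 → ℂ, star x ⬝ᵥ x = 1 ∧ star y ⬝ᵥ y = 1 ∧
        z = star (kvec x y) ⬝ᵥ M.mulVec (kvec x y)} =
      (fun r : ℝ => (r : ℂ)) '' Set.Icc (1 / 2 : ℝ) (5 / 2) ∧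
    (let x : Fin 2 → ℂ := ![1 / Real.sqrt 2, Complex.I / Real.sqrt 2]
     let y : Fin 2 → ℂ := ![1 / Real.sqrt 2, -Complex.I / Real.sqrt 2]
     star (kvec x y) ⬝ᵥ M.mulVec (kvec x y) = (5 / 2 : ℂ)) ∧
    (∀ x y : Fin 2 → ℝ, x 0 ^ 2 + x 1 ^ 2 = 1 → y 0 ^ 2 + y 1 ^ 2 = 1 →
      (star (kvec (fun i => (x i : ℂ)) (fun i => (y i : ℂ))) ⬝ᵥ
        M.mulVec (kvec (fun i => (x i : ℂ)) (fun i => (y i : ℂ)))).re ≤ 2) := by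
  exact ⟨spectrum_M_O, numericalRange_M_O, localNumericalRange_M_O,
    (star_kvec_equatorState_dotProduct_M_O_mulVec (w := -I) (by simp)).trans (by norm_num),
    fun x y => re_star_kvec_ofReal_dotProduct_M_O_mulVec_le_two⟩
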